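/- The vertex-appending differential on determinanted planar clear-edged m-bonsais squares to zero: ∂^{n+1} ∘ ∂^n = 0 for every n ≥ 0, so (C^•, ∂) is a cochain complex. -/

import Mathlib

/-! Core definitions for planar clear-edged bonsais, following Byun,
"A Generalization of Connes-Kreimer Hopf Algebra".

A planar clear-edged `m`-bonsai is a finite rooted plane tree (children of each
vertex linearly ordered, edges unlabeled) in which every vertex has at most `m`
children; we also allow `m = ∞` (no arity bound), so the bound is an `ℕ∞`.
We encode such a tree by its finite set of vertex addresses: the address of a
vertex is the list of the positions (counted from the left, starting at `0`) of
the successive edges on the path from the root to it.  Such a set of addresses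
is prefix-closed and left-sibling-closed, and the arity bound says that every
entry of every address is `< m`. -/

open scoped Classical

structure PTree (m : ℕ∞) where
  verts : Finset (List ℕ)
  root_mem : ([] : List ℕ) ∈ verts
  prefix_closed : ∀ ⦃p q : List ℕ⦄, p ∈ verts → q <+: p → q ∈ verts
  sibling_closed : ∀ (p : List ℕ) (i : ℕ), p ++ [i + 1] ∈ verts → p ++ [i] ∈ verts
  arity_bound : ∀ p ∈ verts, ∀ a ∈ p, (a : ℕ∞) < m

namespace PTree

variable {m : ℕ∞}

theorem ext' {T U : PTree m} (h : T.verts = U.verts) : T = U := by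
  cases T; cases U; simp_all

/-- The one-vertex plane tree. -/
def point (m : ℕ∞) : PTree m where
  verts := {[]}
  root_mem := by simp
  prefix_closed := by
    intro p q hp hq
    simp only [Finset.mem_singleton] at hp ⊢
    subst hp
    exact List.prefix_nil.mp hq
  sibling_closed := by
    intro p i hp
    simp only [Finset.mem_singleton] at hp
    exact absurd hp (by simp)
  arity_bound := by
    intro p hp a ha
    simp only [Finset.mem_singleton] at hp
    subst hp
    simp at ha

/-- Rebuild a plane tree from a raw vertex set (returning the one-vertex tree
on junk input; by proof irrelevance this is harmless). -/
noncomputable def mk' (m : ℕ∞) (s : Finset (List ℕ)) : PTree m :=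
  if h : ([] : List ℕ) ∈ s
      ∧ (∀ ⦃p q : List ℕ⦄, p ∈ s → q <+: p → q ∈ s)
      ∧ (∀ (p : List ℕ) (i : ℕ), p ++ [i + 1] ∈ s → p ++ [i] ∈ s)
      ∧ (∀ p ∈ s, ∀ a ∈ p, (a : ℕ∞) < m)
  then ⟨s, h.1, h.2.1, h.2.2.1, h.2.2.2⟩ else point m

/-- The number of children of the vertex `v` in `T`. -/
noncomputable def arity (T : PTree m) (v : List ℕ) : ℕ :=
  (T.verts.filter (fun p => v <+: p ∧ p.length = v.length + 1)).card

/-- The number of edges of `T`. -/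
def numEdges (T : PTree m) : ℕ := T.verts.card - 1

/-- A vertex of `T` is a tip iff it is incident to exactly one edge and is not
the root, or `T` is the one-vertex tree; equivalently, iff it has no children. -/
noncomputable def IsTip (T : PTree m) (v : List ℕ) : Prop :=
  v ∈ T.verts ∧ arity T v = 0

/-- Re-addressing of vertices when a new child is inserted at position `j` of
the vertex `v`: children of `v` in positions `≥ j` are shifted one step to the
right (together with their subtrees). -/
def shiftAt (v : List ℕ) (j : ℕ) (q : List ℕ) : List ℕ :=
  if v <+: q then
    match q.drop v.length with
    | [] => q
    | i :: r => if j ≤ i then v ++ (i + 1) :: r else q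
  else q

/-- The vertex set obtained from `T` by attaching one new edge to the vertex
`v`, in planar position `j` (with the later siblings shifted right). -/
noncomputable def attachVerts (T : PTree m) (v : List ℕ) (j : ℕ) : Finset (List ℕ) :=
  insert (v ++ [j]) (T.verts.image (shiftAt v j))

/-- The plane tree obtained from `T` by attaching one new edge to the vertex
`v` in planar position `j`. -/
noncomputable def attach (T : PTree m) (v : List ℕ) (j : ℕ) : PTree m :=
  mk' m (attachVerts T v j)

/-- The vertices of `T` at which the vertex-appending differential may attach a
new edge: the non-tips with fewer than `m` children. -/
noncomputable def attachable (T : PTree m) : Finset (List ℕ) :=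
  T.verts.filter (fun v => arity T v ≠ 0 ∧ (arity T v : ℕ∞) < m)

end PTree

section Differential

variable (k : Type) [Field k] (m : ℕ∞)

/-- The free `k`-module on planar clear-edged bonsais (with the determinant
terms of the edges normalized to the traversing order, i.e. the lexicographic
order of the addresses). -/
abbrev PTreeMod (k : Type) [Field k] (m : ℕ∞) := PTree m →₀ k

/-- The vertex-appending differential on a determinanted planar clear-edged
bonsai: `∂(T ⊗ det T) = Σ T' ⊗ e ∧ det T`, summed over all trees `T'` obtained
from `T` by attaching one new edge `e`, in any planar position, to a vertex
that is not a tip and has fewer than `m` children; `e ∧ det T` is re-expressed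
in the traversing order of `T'` using the sign rule. -/
noncomputable def pVal (T : PTree m) : PTreeMod k m :=
  ∑ v ∈ PTree.attachable T, ∑ j ∈ Finset.range (PTree.arity T v + 1),
    ((-1 : k) ^ ((((PTree.attachVerts T v j).erase []).filter
        (fun q => q < v ++ [j])).card))
      • Finsupp.single (PTree.attach T v j) 1

/-- The vertex-appending differential, extended linearly. -/
noncomputable def pMap : PTreeMod k m →ₗ[k] PTreeMod k m :=
  Finsupp.lsum k (fun T => LinearMap.toSpanSingleton k (PTreeMod k m) (pVal k m T))

end Differential

namespace PfAux

/-- cons-cons inversion for lex on `List ℕ`. -/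
theorem lex_cons_iff {a b : ℕ} {l m : List ℕ} :
    (a :: l : List ℕ) < b :: m ↔ a < b ∨ (a = b ∧ l < m) := by
  show List.Lex _ _ _ ↔ _
  constructor
  · intro h
    cases h with
    | cons h => exact Or.inr ⟨rfl, h⟩
    | rel h => exact Or.inl h
  · rintro (h | ⟨rfl, h⟩)
    · exact List.Lex.rel h
    · exact List.Lex.cons h

theorem append_lt_append_iff (v : List ℕ) {s t : List ℕ} :
    v ++ s < v ++ t ↔ s < t := by
  induction v with
  | nil => rfl
  | cons a v ih => simpa [lex_cons_iff] using ih

theorem not_lt_prefix {v s : List ℕ} : ¬ (v ++ s < v) := by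
  intro h
  induction v with
  | nil => exact (List.not_lt_nil _ h)
  | cons a v ih => exact ih (by rcases lex_cons_iff.1 h with h | ⟨_, h⟩ <;> simp_all)

theorem lt_append_of_ne_nil {v s : List ℕ} (h : s ≠ []) : v < v ++ s := by
  have : ([] : List ℕ) < s := by
    cases s with
    | nil => simp at h
    | cons a s => exact List.nil_lt_cons a s
  simpa using (append_lt_append_iff v (s := []) (t := s)).2 this

/-- If `v` is not a prefix of `q`, comparison of `q` with `v ++ s` does not
depend on `s`. -/
theorem lt_append_congr {v q : List ℕ} (h : ¬ v <+: q) (s t : List ℕ) :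
    (v ++ s < q ↔ v ++ t < q) ∧ (q < v ++ s ↔ q < v ++ t) := by
  induction v generalizing q with
  | nil => simp at h
  | cons a v ih =>
    cases q with
    | nil =>
      constructor
      · constructor <;> (intro hh; exact absurd hh (List.not_lt_nil _))
      · constructor <;> (intro _; exact List.nil_lt_cons _ _)
    | cons b q =>
      by_cases hab : a = b
      · subst hab
        have h' : ¬ v <+: q := fun hc => h (List.cons_prefix_cons.2 ⟨rfl, hc⟩)
        have := ih h'
        constructor
        · simp only [List.cons_append, lex_cons_iff]
          rw [this.1]
        · simp only [List.cons_append, lex_cons_iff]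
          rw [this.2]
      · constructor <;>
        · simp only [List.cons_append, lex_cons_iff]
          constructor <;> (rintro (hh | ⟨rfl, hh⟩) <;> first | exact Or.inl hh | simp_all)

end PfAux
namespace PfAux

open PTree

/-! ### Basic `shiftAt` API -/

theorem shiftAt_of_not_prefix {v q : List ℕ} (j : ℕ) (h : ¬ v <+: q) :
    shiftAt v j q = q := by
  unfold shiftAt; rw [if_neg h]

@[simp] theorem shiftAt_self (v : List ℕ) (j : ℕ) : shiftAt v j v = v := by
  unfold shiftAt
  rw [if_pos List.prefix_rfl]
  simp

theorem shiftAt_append_cons (v : List ℕ) (j i : ℕ) (r : List ℕ) :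
    shiftAt v j (v ++ i :: r) = if j ≤ i then v ++ (i + 1) :: r else v ++ i :: r := by
  unfold shiftAt
  rw [if_pos (List.prefix_append _ _), List.drop_left]

theorem shiftAt_append_cons_of_le {v : List ℕ} {j i : ℕ} (r : List ℕ) (h : j ≤ i) :
    shiftAt v j (v ++ i :: r) = v ++ (i + 1) :: r := by
  rw [shiftAt_append_cons, if_pos h]

theorem shiftAt_append_cons_of_lt {v : List ℕ} {j i : ℕ} (r : List ℕ) (h : i < j) :
    shiftAt v j (v ++ i :: r) = v ++ i :: r := by
  rw [shiftAt_append_cons, if_neg (by omega)]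

/-- Case analysis on the position of `q` relative to `v`. -/
theorem shift_cases (v q : List ℕ) :
    ¬ v <+: q ∨ v = q ∨ ∃ i r, q = v ++ i :: r := by
  by_cases h : v <+: q
  · obtain ⟨t, rfl⟩ := h
    cases t with
    | nil => exact Or.inr (Or.inl (by simp))
    | cons i r => exact Or.inr (Or.inr ⟨i, r, rfl⟩)
  · exact Or.inl h

@[simp] theorem shiftAt_nil (v : List ℕ) (j : ℕ) : shiftAt v j [] = [] := by
  rcases shift_cases v [] with h | h | ⟨i, r, h⟩
  · exact shiftAt_of_not_prefix j h
  · subst h; exact shiftAt_self [] j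
  · exact absurd h (by simp)

theorem not_append_cons_prefix (v : List ℕ) (i : ℕ) (r : List ℕ) : ¬ (v ++ i :: r) <+: v := by
  intro h; have := h.length_le; simp at this

/-- `shiftAt` is strictly monotone for the lexicographic order. -/
theorem shiftAt_strictMono (v : List ℕ) (j : ℕ) : StrictMono (shiftAt v j) := by
  intro q₁ q₂ hlt
  rcases shift_cases v q₁ with h1 | h1 | ⟨i₁, r₁, h1⟩ <;>
    rcases shift_cases v q₂ with h2 | h2 | ⟨i₂, r₂, h2⟩ <;>
    (try subst h1) <;> (try subst h2)
  · rwa [shiftAt_of_not_prefix j h1, shiftAt_of_not_prefix j h2]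
  · rwa [shiftAt_of_not_prefix j h1, shiftAt_self]
  · rw [shiftAt_of_not_prefix j h1, shiftAt_append_cons]
    split_ifs
    · exact ((lt_append_congr h1 ((i₂+1) :: r₂) (i₂ :: r₂)).2).2 hlt
    · exact hlt
  · rwa [shiftAt_self, shiftAt_of_not_prefix j h2]
  · exact absurd hlt (lt_irrefl _)
  · rw [shiftAt_self, shiftAt_append_cons]
    split_ifs <;> exact lt_append_of_ne_nil (by simp)
  · rw [shiftAt_append_cons, shiftAt_of_not_prefix j h2]
    split_ifs
    · exact ((lt_append_congr h2 ((i₁+1) :: r₁) (i₁ :: r₁)).1).2 hlt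
    · exact hlt
  · exact absurd hlt not_lt_prefix
  · rw [shiftAt_append_cons, shiftAt_append_cons]
    have h12 : i₁ < i₂ ∨ (i₁ = i₂ ∧ r₁ < r₂) :=
      lex_cons_iff.1 ((append_lt_append_iff v).1 hlt)
    split_ifs with ha hb hb <;>
      refine (append_lt_append_iff v).2 (lex_cons_iff.2 ?_) <;>
      rcases h12 with h | ⟨heq, h⟩ <;> first
        | (left; omega)
        | (right; exact ⟨by omega, by subst heq; exact h⟩)
        | omega

theorem shiftAt_injective (v : List ℕ) (j : ℕ) : Function.Injective (shiftAt v j) :=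
  (shiftAt_strictMono v j).injective

theorem shiftAt_lt_iff (v : List ℕ) (j : ℕ) {a b : List ℕ} :
    shiftAt v j a < shiftAt v j b ↔ a < b :=
  (shiftAt_strictMono v j).lt_iff_lt

/-- `shiftAt` commutes with appending a single child index, away from `v`. -/
theorem shiftAt_append_singleton {v u : List ℕ} (j : ℕ) (h : u ≠ v) (x : ℕ) :
    shiftAt v j (u ++ [x]) = shiftAt v j u ++ [x] := by
  rcases shift_cases v u with hn | hu | ⟨i, r, hu⟩
  · rw [shiftAt_of_not_prefix j hn]
    by_cases hp : v <+: u ++ [x]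
    · rcases List.prefix_concat_iff.1 hp with hv | hp'
      · rw [← hv, shiftAt_self, hv]
      · exact absurd hp' hn
    · rw [shiftAt_of_not_prefix j hp]
  · exact absurd hu.symm h
  · subst hu
    have e1 : (v ++ i :: r) ++ [x] = v ++ i :: (r ++ [x]) := by simp
    rw [e1, shiftAt_append_cons, shiftAt_append_cons]
    split_ifs <;> simp

theorem shiftAt_ne_new (v : List ℕ) (j : ℕ) (q : List ℕ) :
    shiftAt v j q ≠ v ++ [j] := by
  rcases shift_cases v q with h | h | ⟨i, r, h⟩
  · rw [shiftAt_of_not_prefix j h]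
    rintro rfl
    exact h (List.prefix_append _ _)
  · subst h
    rw [shiftAt_self]
    intro hh
    have := congrArg List.length hh
    simp at this
  · subst h
    rw [shiftAt_append_cons]
    split_ifs with hj <;> intro hh <;>
      · have := List.append_cancel_left hh
        simp at this
        omega

/-- Prefixes are preserved by `shiftAt`. -/
theorem shiftAt_prefix_mono {p q : List ℕ} (v : List ℕ) (j : ℕ) (h : p <+: q) :
    shiftAt v j p <+: shiftAt v j q := by
  rcases shift_cases v p with h1 | h1 | ⟨i₁, r₁, h1⟩
  · rw [shiftAt_of_not_prefix j h1]
    rcases shift_cases v q with h2 | h2 | ⟨i₂, r₂, h2⟩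
    · rwa [shiftAt_of_not_prefix j h2]
    · subst h2; rwa [shiftAt_self]
    · subst h2
      rw [shiftAt_append_cons]
      have hpv : p <+: v := by
        rcases List.prefix_or_prefix_of_prefix h (List.prefix_append v (i₂ :: r₂)) with hh | hh
        · exact hh
        · exact absurd hh h1
      split_ifs
      · exact hpv.trans (List.prefix_append _ _)
      · exact h
  · subst h1
    rw [shiftAt_self]
    rcases shift_cases v q with h2 | h2 | ⟨i₂, r₂, h2⟩
    · exact absurd h h2
    · subst h2; simp
    · subst h2
      rw [shiftAt_append_cons]
      split_ifs <;> exact List.prefix_append _ _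
  · subst h1
    obtain ⟨t, rfl⟩ := h
    have e1 : (v ++ i₁ :: r₁) ++ t = v ++ i₁ :: (r₁ ++ t) := by simp
    rw [e1, shiftAt_append_cons, shiftAt_append_cons]
    split_ifs <;> simp

/-! ### `unshiftAt`, a left inverse -/

/-- Inverse re-addressing. -/
def unshiftAt (v : List ℕ) (j : ℕ) (q : List ℕ) : List ℕ :=
  if v <+: q then
    match q.drop v.length with
    | [] => q
    | i :: r => if j < i then v ++ (i - 1) :: r else q
  else q

theorem unshiftAt_of_not_prefix {v q : List ℕ} (j : ℕ) (h : ¬ v <+: q) :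
    unshiftAt v j q = q := by
  unfold unshiftAt; rw [if_neg h]

@[simp] theorem unshiftAt_self (v : List ℕ) (j : ℕ) : unshiftAt v j v = v := by
  unfold unshiftAt
  rw [if_pos List.prefix_rfl]
  simp

theorem unshiftAt_append_cons (v : List ℕ) (j i : ℕ) (r : List ℕ) :
    unshiftAt v j (v ++ i :: r) = if j < i then v ++ (i - 1) :: r else v ++ i :: r := by
  unfold unshiftAt
  rw [if_pos (List.prefix_append _ _), List.drop_left]

theorem unshiftAt_shiftAt (v : List ℕ) (j : ℕ) (q : List ℕ) :
    unshiftAt v j (shiftAt v j q) = q := by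
  rcases shift_cases v q with h | h | ⟨i, r, h⟩
  · rw [shiftAt_of_not_prefix j h, unshiftAt_of_not_prefix j h]
  · subst h; rw [shiftAt_self, unshiftAt_self]
  · subst h
    rw [shiftAt_append_cons]
    split_ifs with hj
    · rw [unshiftAt_append_cons, if_pos (by omega)]
      simp
    · rw [unshiftAt_append_cons, if_neg (by omega)]

theorem shiftAt_unshiftAt_of_mem {v : List ℕ} {j : ℕ} {q : List ℕ}
    (h : ∃ q₀, shiftAt v j q₀ = q) : shiftAt v j (unshiftAt v j q) = q := by
  obtain ⟨q₀, rfl⟩ := h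
  rw [unshiftAt_shiftAt]

theorem shiftAt_eq_self_iff {v : List ℕ} {j : ℕ} {u : List ℕ} :
    shiftAt v j u = v ↔ u = v := by
  constructor
  · intro h
    have h2 := unshiftAt_shiftAt v j u
    rw [h, unshiftAt_self] at h2
    exact h2.symm
  · intro h; rw [h]; exact shiftAt_self _ _

end PfAux
namespace PfAux

open PTree

theorem app_cons_congr (v r : List ℕ) {a b : ℕ} (h : a = b) :
    v ++ a :: r = v ++ b :: r := by rw [h]

/-- Prefixes are reflected by `shiftAt`. -/
theorem shiftAt_prefix_reflect {a b : List ℕ} (v : List ℕ) (j : ℕ)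
    (h : shiftAt v j a <+: shiftAt v j b) : a <+: b := by
  rcases shift_cases v a with h1 | h1 | ⟨i₁, r₁, h1⟩
  · rw [shiftAt_of_not_prefix j h1] at h
    rcases shift_cases v b with h2 | h2 | ⟨i₂, r₂, h2⟩
    · rwa [shiftAt_of_not_prefix j h2] at h
    · subst h2; rwa [shiftAt_self] at h
    · subst h2
      rw [shiftAt_append_cons] at h
      have hav : a <+: v := by
        split_ifs at h with hsp
        · rcases List.prefix_or_prefix_of_prefix h (List.prefix_append v ((i₂+1) :: r₂))
            with hh | hh
          · exact hh
          · exact absurd hh h1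
        · rcases List.prefix_or_prefix_of_prefix h (List.prefix_append v (i₂ :: r₂))
            with hh | hh
          · exact hh
          · exact absurd hh h1
      exact hav.trans (List.prefix_append _ _)
  · subst h1
    rw [shiftAt_self] at h
    rcases shift_cases v b with h2 | h2 | ⟨i₂, r₂, h2⟩
    · rwa [shiftAt_of_not_prefix j h2] at h
    · subst h2; exact List.prefix_rfl
    · subst h2; exact List.prefix_append _ _
  · subst h1
    rw [shiftAt_append_cons] at h
    rcases shift_cases v b with h2 | h2 | ⟨i₂, r₂, h2⟩
    · rw [shiftAt_of_not_prefix j h2] at h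
      exfalso
      apply h2
      split_ifs at h
      · exact (List.prefix_append v ((i₁+1) :: r₁)).trans h
      · exact (List.prefix_append v (i₁ :: r₁)).trans h
    · subst h2
      rw [shiftAt_self] at h
      exfalso
      split_ifs at h <;> exact not_append_cons_prefix _ _ _ h
    · subst h2
      rw [shiftAt_append_cons] at h
      split_ifs at h with ha hb hb <;>
      · rw [List.prefix_append_right_inj] at h
        rcases List.cons_prefix_cons.1 h with ⟨he, hr⟩
        refine (List.prefix_append_right_inj v).2 (List.cons_prefix_cons.2 ⟨by omega, hr⟩)

/-- Composing two attachments at the same vertex. -/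
theorem comp_same (v : List ℕ) (j l : ℕ) (q : List ℕ) :
    shiftAt v l (shiftAt v j q) =
      shiftAt v (if l ≤ j then j + 1 else j) (shiftAt v (if j < l then l - 1 else l) q) := by
  rcases shift_cases v q with h | h | ⟨i, r, h⟩
  · rw [shiftAt_of_not_prefix j h, shiftAt_of_not_prefix l h,
      shiftAt_of_not_prefix _ h, shiftAt_of_not_prefix _ h]
  · subst h; simp
  · subst h
    simp only [shiftAt_append_cons]
    split_ifs <;> simp only [shiftAt_append_cons] <;> split_ifs <;>
      exact app_cons_congr _ _ (by omega)

/-- Composing an attachment at `v` with one at a strict descendant `v ++ c :: s`. -/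
theorem comp_nested (v s : List ℕ) (c j l : ℕ) (q : List ℕ) :
    shiftAt (shiftAt v j (v ++ c :: s)) l (shiftAt v j q)
      = shiftAt v j (shiftAt (v ++ c :: s) l q) := by
  have key : ∀ (u : List ℕ) (k e : ℕ) (t : List ℕ),
      shiftAt u k (u ++ e :: t) = u ++ (if k ≤ e then e + 1 else e) :: t := by
    intro u k e t; rw [shiftAt_append_cons]; split_ifs <;> rfl
  rcases shift_cases (v ++ c :: s) q with hw | hw | ⟨e, t, hw⟩
  · rw [shiftAt_of_not_prefix l hw]
    have h2 : ¬ shiftAt v j (v ++ c :: s) <+: shiftAt v j q :=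
      fun hc => hw (shiftAt_prefix_reflect v j hc)
    rw [shiftAt_of_not_prefix l h2]
  · subst hw
    rw [shiftAt_self, key v j c s, shiftAt_self, key v j c s]
  · subst hw
    rw [key (v ++ c :: s) l e t,
      show (v ++ c :: s) ++ e :: t = v ++ c :: (s ++ e :: t) from by simp,
      key v j c (s ++ e :: t), key v j c s,
      show v ++ (if j ≤ c then c + 1 else c) :: (s ++ e :: t)
          = (v ++ (if j ≤ c then c + 1 else c) :: s) ++ e :: t from by simp,
      key (v ++ (if j ≤ c then c + 1 else c) :: s) l e t,
      show (v ++ c :: s) ++ (if l ≤ e then e + 1 else e) :: t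
          = v ++ c :: (s ++ (if l ≤ e then e + 1 else e) :: t) from by simp,
      key v j c (s ++ (if l ≤ e then e + 1 else e) :: t)]
    simp

/-- Attachments at incomparable vertices commute. -/
theorem comp_incomp {v w₀ : List ℕ} (hvw : ¬ v <+: w₀) (hwv : ¬ w₀ <+: v)
    (j l : ℕ) (q : List ℕ) :
    shiftAt w₀ l (shiftAt v j q) = shiftAt v j (shiftAt w₀ l q) := by
  by_cases hv : v <+: q <;> by_cases hw : w₀ <+: q
  · rcases List.prefix_or_prefix_of_prefix hv hw with hh | hh
    · exact absurd hh hvw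
    · exact absurd hh hwv
  · rw [shiftAt_of_not_prefix l hw]
    have h2 : ¬ w₀ <+: shiftAt v j q := by
      intro hc
      rw [← shiftAt_of_not_prefix (q := w₀) j hvw] at hc
      exact hw (shiftAt_prefix_reflect v j hc)
    rw [shiftAt_of_not_prefix l h2]
  · rw [shiftAt_of_not_prefix j hv]
    have h2 : ¬ v <+: shiftAt w₀ l q := by
      intro hc
      rw [← shiftAt_of_not_prefix (q := v) l hwv] at hc
      exact hv (shiftAt_prefix_reflect w₀ l hc)
    rw [shiftAt_of_not_prefix j h2]
  · rw [shiftAt_of_not_prefix j hv, shiftAt_of_not_prefix l hw,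
      shiftAt_of_not_prefix j hv]

end PfAux
namespace PfAux

open PTree

theorem shiftAt_append_cons_ite (u : List ℕ) (k e : ℕ) (t : List ℕ) :
    shiftAt u k (u ++ e :: t) = u ++ (if k ≤ e then e + 1 else e) :: t := by
  rw [shiftAt_append_cons]; split_ifs <;> rfl

theorem append_cons_ne_self (v : List ℕ) (c : ℕ) (s : List ℕ) : v ++ c :: s ≠ v := by
  intro h
  have := congrArg List.length h
  simp at this

theorem not_prefix_append_singleton {v w₀ : List ℕ} (hvw : ¬ v <+: w₀)
    (hwv : ¬ w₀ <+: v) (x : ℕ) : ¬ w₀ <+: v ++ [x] := by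
  intro h
  rcases List.prefix_concat_iff.1 h with h | h
  · exact hvw (h ▸ List.prefix_append _ _)
  · exact hwv h

/-- Main commutation: the two orders of performing a pair of attachments
induce the same re-addressing map. -/
theorem master_comp (v : List ℕ) (j : ℕ) (w₀ : List ℕ) (l : ℕ) (q : List ℕ) :
    shiftAt (shiftAt v j w₀) l (shiftAt v j q)
      = shiftAt (shiftAt w₀ (if w₀ = v ∧ j < l then l - 1 else l) v)
          (if w₀ = v ∧ l ≤ j then j + 1 else j)
          (shiftAt w₀ (if w₀ = v ∧ j < l then l - 1 else l) q) := by
  by_cases hev : w₀ = v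
  · subst hev
    simp only [eq_self_iff_true, true_and, shiftAt_self]
    exact comp_same w₀ j l q
  · rw [if_neg (fun h => hev h.1), if_neg (fun h => hev h.1)]
    rcases shift_cases v w₀ with hn | he | ⟨c, s, hc⟩
    · rcases shift_cases w₀ v with hn2 | he2 | ⟨d, u, hd⟩
      · rw [shiftAt_of_not_prefix j hn, shiftAt_of_not_prefix l hn2]
        exact comp_incomp hn hn2 j l q
      · exact absurd he2 hev
      · subst hd
        rw [shiftAt_of_not_prefix j (not_append_cons_prefix _ _ _)]
        exact (comp_nested w₀ u d l j q).symm
    · exact absurd he.symm hev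
    · subst hc
      rw [shiftAt_of_not_prefix _ (not_append_cons_prefix _ _ _)]
      exact comp_nested v s c j l q

/-- Where the first new tip ends up after the second attachment. -/
theorem master_tip1 (v : List ℕ) (j : ℕ) (w₀ : List ℕ) (l : ℕ) :
    shiftAt (shiftAt v j w₀) l (v ++ [j])
      = (shiftAt w₀ (if w₀ = v ∧ j < l then l - 1 else l) v)
          ++ [if w₀ = v ∧ l ≤ j then j + 1 else j] := by
  by_cases hev : w₀ = v
  · subst hev
    simp only [eq_self_iff_true, true_and, shiftAt_self]
    rw [shiftAt_append_cons_ite]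
  · rw [if_neg (fun h => hev h.1), if_neg (fun h => hev h.1)]
    rcases shift_cases v w₀ with hn | he | ⟨c, s, hc⟩
    · rcases shift_cases w₀ v with hn2 | he2 | ⟨d, u, hd⟩
      · rw [shiftAt_of_not_prefix j hn, shiftAt_of_not_prefix _ hn2,
          shiftAt_of_not_prefix l (not_prefix_append_singleton hn hn2 j)]
      · exact absurd he2 hev
      · subst hd
        rw [shiftAt_of_not_prefix j (not_append_cons_prefix _ _ _),
          show (w₀ ++ d :: u) ++ [j] = w₀ ++ d :: (u ++ [j]) from by simp,
          shiftAt_append_cons_ite, shiftAt_append_cons_ite]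
        simp
    · exact absurd he.symm hev
    · subst hc
      rw [shiftAt_of_not_prefix _ (not_append_cons_prefix _ _ _),
        shiftAt_append_cons_ite]
      rw [shiftAt_of_not_prefix l]
      intro hco
      rw [List.prefix_append_right_inj] at hco
      rcases List.cons_prefix_cons.1 hco with ⟨he, _⟩
      split_ifs at he <;> omega

/-- Where the second new tip ends up, in the swapped order. -/
theorem master_tip2 (v : List ℕ) (j : ℕ) (w₀ : List ℕ) (l : ℕ) :
    shiftAt (shiftAt w₀ (if w₀ = v ∧ j < l then l - 1 else l) v)
        (if w₀ = v ∧ l ≤ j then j + 1 else j)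
        (w₀ ++ [if w₀ = v ∧ j < l then l - 1 else l])
      = (shiftAt v j w₀) ++ [l] := by
  by_cases hev : w₀ = v
  · subst hev
    simp only [eq_self_iff_true, true_and, shiftAt_self]
    rw [shiftAt_append_cons_ite]
    split_ifs <;> (apply app_cons_congr; omega)
  · rw [if_neg (fun h => hev h.1), if_neg (fun h => hev h.1)]
    rcases shift_cases v w₀ with hn | he | ⟨c, s, hc⟩
    · rcases shift_cases w₀ v with hn2 | he2 | ⟨d, u, hd⟩
      · rw [shiftAt_of_not_prefix l hn2, shiftAt_of_not_prefix j hn,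
          shiftAt_of_not_prefix j (not_prefix_append_singleton hn2 hn l)]
      · exact absurd he2 hev
      · subst hd
        rw [shiftAt_of_not_prefix j (not_append_cons_prefix _ _ _),
          shiftAt_append_cons_ite]
        rw [shiftAt_of_not_prefix _]
        intro hco
        rw [List.prefix_append_right_inj] at hco
        rcases List.cons_prefix_cons.1 hco with ⟨he, _⟩
        split_ifs at he <;> omega
    · exact absurd he.symm hev
    · subst hc
      rw [shiftAt_of_not_prefix l (not_append_cons_prefix _ _ _),
        show (v ++ c :: s) ++ [l] = v ++ c :: (s ++ [l]) from by simp,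
        shiftAt_append_cons_ite, shiftAt_append_cons_ite]
      simp

end PfAux
namespace PfAux

open PTree

theorem finset_nat_downward {J : Finset ℕ} (h : ∀ i, i + 1 ∈ J → i ∈ J) :
    J = Finset.range J.card := by
  have hdc : ∀ i, i ∈ J → ∀ k, k ≤ i → k ∈ J := by
    intro i
    induction i with
    | zero => intro hi k hk; have hk0 : k = 0 := by omega
              subst hk0; exact hi
    | succ n ih =>
      intro hi k hk
      rcases Nat.eq_or_lt_of_le hk with rfl | hlt
      · exact hi
      · exact ih (h n hi) k (by omega)
  have hsub : J ⊆ Finset.range J.card := by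
    intro i hi
    rw [Finset.mem_range]
    have : Finset.range (i + 1) ⊆ J := by
      intro k hk
      exact hdc i hi k (by simpa using Nat.lt_succ_iff.1 (Finset.mem_range.1 hk))
    have := Finset.card_le_card this
    simpa using this
  exact Finset.eq_of_subset_of_card_le hsub (by simp)

variable {m : ℕ∞}

theorem child_mem_iff (T : PTree m) (v : List ℕ) (i : ℕ) :
    v ++ [i] ∈ T.verts ↔ i < arity T v := by
  classical
  set F := T.verts.filter (fun p => v <+: p ∧ p.length = v.length + 1) with hF
  have hmemF : ∀ p, p ∈ F ↔ ∃ x, p = v ++ [x] ∧ p ∈ T.verts := by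
    intro p
    rw [hF, Finset.mem_filter]
    constructor
    · rintro ⟨hp, ⟨t, rfl⟩, hlen⟩
      have ht : t.length = 1 := by simpa using hlen
      obtain ⟨a, rfl⟩ := List.length_eq_one_iff.1 ht
      exact ⟨a, rfl, hp⟩
    · rintro ⟨x, rfl, hp⟩
      exact ⟨hp, List.prefix_append _ _, by simp⟩
  set g : List ℕ → ℕ := fun p => p.getD v.length 0 with hg
  have hgv : ∀ x : ℕ, g (v ++ [x]) = x := by
    intro x
    simp [hg, List.getD, List.getElem?_append_right (le_refl v.length)]
  set J := F.image g with hJ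
  have hmemJ : ∀ x, x ∈ J ↔ v ++ [x] ∈ T.verts := by
    intro x
    rw [hJ, Finset.mem_image]
    constructor
    · rintro ⟨p, hp, hpg⟩
      obtain ⟨y, rfl, hmem⟩ := (hmemF p).1 hp
      rw [hgv] at hpg
      rwa [hpg] at hmem
    · intro hx
      exact ⟨v ++ [x], (hmemF _).2 ⟨x, rfl, hx⟩, hgv x⟩
  have hdown : ∀ x, x + 1 ∈ J → x ∈ J := by
    intro x hx
    rw [hmemJ] at hx ⊢
    exact T.sibling_closed v x hx
  have hcard : J.card = F.card := by
    rw [hJ]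
    apply Finset.card_image_of_injOn
    intro p hp q hq hpq
    obtain ⟨x, rfl, _⟩ := (hmemF p).1 hp
    obtain ⟨y, rfl, _⟩ := (hmemF q).1 hq
    rw [hgv, hgv] at hpq
    rw [hpq]
  have := finset_nat_downward hdown
  rw [← hmemJ, this, Finset.mem_range, hcard]
  rfl

theorem arity_eq_of_forall (T : PTree m) (v : List ℕ) (K : ℕ)
    (h : ∀ i, v ++ [i] ∈ T.verts ↔ i < K) : arity T v = K := by
  rcases lt_trichotomy (arity T v) K with hlt | heq | hgt
  · have h1 := (child_mem_iff T v (arity T v)).1 ((h (arity T v)).2 hlt)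
    omega
  · exact heq
  · have h1 := (h K).1 ((child_mem_iff T v K).2 hgt)
    omega

end PfAux
namespace PfAux

open PTree

variable {m : ℕ∞}

theorem prefix_antisymm {a b : List ℕ} (h1 : a <+: b) (h2 : b <+: a) : a = b := by
  obtain ⟨t, rfl⟩ := h1
  have h3 := h2.length_le
  simp only [List.length_append] at h3
  have : t = [] := List.eq_nil_of_length_eq_zero (by omega)
  simp [this]

theorem prefix_append_cases {q a b : List ℕ} (h : q <+: a ++ b) :
    q <+: a ∨ ∃ b', b' <+: b ∧ q = a ++ b' := by
  rcases List.prefix_or_prefix_of_prefix h (List.prefix_append a b) with h1 | h1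
  · exact Or.inl h1
  · obtain ⟨t, rfl⟩ := h1
    exact Or.inr ⟨t, (List.prefix_append_right_inj a).1 h, rfl⟩

theorem base_prefix_mem {T : PTree m} {v q : List ℕ} (j : ℕ) (hv : v ∈ T.verts)
    (hq : q <+: v) : q ∈ attachVerts T v j := by
  have hqT := T.prefix_closed hv hq
  by_cases h : q = v
  · subst h
    exact Finset.mem_insert_of_mem (Finset.mem_image.2 ⟨q, hqT, shiftAt_self q j⟩)
  · have hnv : ¬ v <+: q := fun hvq => h (prefix_antisymm hq hvq)
    exact Finset.mem_insert_of_mem (Finset.mem_image.2 ⟨q, hqT, shiftAt_of_not_prefix j hnv⟩)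

theorem attachVerts_prefix_closed (T : PTree m) {v : List ℕ} (j : ℕ) (hv : v ∈ T.verts)
    {p q : List ℕ} (hp : p ∈ attachVerts T v j) (hq : q <+: p) :
    q ∈ attachVerts T v j := by
  rcases Finset.mem_insert.1 hp with hp1 | him
  · subst hp1
    rcases prefix_append_cases hq with hqv | ⟨b', hb', rfl⟩
    · exact base_prefix_mem j hv hqv
    · rcases List.prefix_concat_iff.1 (show b' <+: [] ++ [j] from by simpa using hb')
        with hb2 | hnil
      · rw [show (([] : List ℕ) ++ [j]) = [j] from by simp] at hb2
        rw [hb2]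
        exact Finset.mem_insert_self _ _
      · have hb0 : b' = [] := List.prefix_nil.1 hnil
        subst hb0
        rw [List.append_nil]
        exact base_prefix_mem j hv List.prefix_rfl
  · obtain ⟨p₀, hp₀, rfl⟩ := Finset.mem_image.1 him
    rcases shift_cases v p₀ with hn | he | ⟨c, r, hcr⟩
    · rw [shiftAt_of_not_prefix j hn] at hq
      have hqT := T.prefix_closed hp₀ hq
      have hnn : ¬ v <+: q := fun hvq => hn (hvq.trans hq)
      exact Finset.mem_insert_of_mem
        (Finset.mem_image.2 ⟨q, hqT, shiftAt_of_not_prefix j hnn⟩)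
    · subst he
      rw [shiftAt_self] at hq
      exact base_prefix_mem j hv hq
    · subst hcr
      rw [shiftAt_append_cons] at hq
      split_ifs at hq with hjc
      · rcases prefix_append_cases hq with hqv | ⟨b', hb', rfl⟩
        · exact base_prefix_mem j hv hqv
        · cases b' with
          | nil =>
            rw [List.append_nil]
            exact base_prefix_mem j hv List.prefix_rfl
          | cons x xs =>
            rcases List.cons_prefix_cons.1 hb' with ⟨hxc, hxs⟩
            have hmem : v ++ c :: xs ∈ T.verts :=
              T.prefix_closed hp₀
                ((List.prefix_append_right_inj v).2 (List.cons_prefix_cons.2 ⟨rfl, hxs⟩))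
            refine Finset.mem_insert_of_mem (Finset.mem_image.2 ⟨v ++ c :: xs, hmem, ?_⟩)
            rw [shiftAt_append_cons_of_le xs hjc, hxc]
      · rcases prefix_append_cases hq with hqv | ⟨b', hb', rfl⟩
        · exact base_prefix_mem j hv hqv
        · cases b' with
          | nil =>
            rw [List.append_nil]
            exact base_prefix_mem j hv List.prefix_rfl
          | cons x xs =>
            rcases List.cons_prefix_cons.1 hb' with ⟨hxc, hxs⟩
            have hmem : v ++ x :: xs ∈ T.verts :=
              T.prefix_closed hp₀
                ((List.prefix_append_right_inj v).2 (List.cons_prefix_cons.2 ⟨hxc, hxs⟩))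
            refine Finset.mem_insert_of_mem (Finset.mem_image.2 ⟨v ++ x :: xs, hmem, ?_⟩)
            exact shiftAt_append_cons_of_lt xs (by omega)

theorem attachVerts_sibling_closed (T : PTree m) {v : List ℕ} {j : ℕ}
    (hv : v ∈ T.verts) (hj : j ≤ arity T v) (p : List ℕ) (i : ℕ)
    (hp : p ++ [i + 1] ∈ attachVerts T v j) : p ++ [i] ∈ attachVerts T v j := by
  rcases Finset.mem_insert.1 hp with hp1 | him
  · obtain ⟨rfl, hji⟩ := List.append_inj' hp1 rfl
    have hij : i + 1 = j := by simpa using hji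
    have hiT : p ++ [i] ∈ T.verts := (child_mem_iff T p i).2 (by omega)
    exact Finset.mem_insert_of_mem
      (Finset.mem_image.2 ⟨p ++ [i], hiT, shiftAt_append_cons_of_lt [] (by omega)⟩)
  · obtain ⟨q₀, hq₀, hsh⟩ := Finset.mem_image.1 him
    rcases List.eq_nil_or_concat q₀ with rfl | ⟨u, c, rfl⟩
    · rw [shiftAt_nil] at hsh
      exact absurd hsh.symm (by simp)
    · rw [List.concat_eq_append] at hq₀ hsh
      by_cases huv : u = v
      · rw [huv] at hq₀ hsh
        rw [shiftAt_append_cons] at hsh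
        split_ifs at hsh with hjc
        · obtain ⟨hpv, hc⟩ := List.append_inj' hsh rfl
          have hic : c = i := by simpa using hc
          rw [← hpv]
          by_cases hcj : c = j
          · rw [show i = j from by omega]
            exact Finset.mem_insert_self _ _
          · have hmem : v ++ [c - 1] ∈ T.verts := by
              rw [child_mem_iff]
              have := (child_mem_iff T v c).1 hq₀
              omega
            refine Finset.mem_insert_of_mem
              (Finset.mem_image.2 ⟨v ++ [c - 1], hmem, ?_⟩)
            rw [shiftAt_append_cons_of_le [] (by omega)]
            exact app_cons_congr _ _ (by omega)
        · obtain ⟨hpv, hc⟩ := List.append_inj' hsh rfl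
          have hic : c = i + 1 := by simpa using hc
          rw [← hpv]
          have hmem : v ++ [i] ∈ T.verts := T.sibling_closed v i (by rw [← hic]; exact hq₀)
          refine Finset.mem_insert_of_mem (Finset.mem_image.2 ⟨v ++ [i], hmem, ?_⟩)
          exact shiftAt_append_cons_of_lt [] (by omega)
      · rw [shiftAt_append_singleton j huv c] at hsh
        obtain ⟨hpu, hc⟩ := List.append_inj' hsh rfl
        have hic : c = i + 1 := by simpa using hc
        rw [hic] at hq₀
        have hmem : u ++ [i] ∈ T.verts := T.sibling_closed u i hq₀
        refine Finset.mem_insert_of_mem (Finset.mem_image.2 ⟨u ++ [i], hmem, ?_⟩)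
        rw [shiftAt_append_singleton j huv i, hpu]

theorem attachVerts_arity_bound (T : PTree m) {v : List ℕ} {j : ℕ}
    (hv : v ∈ T.verts) (hm : (arity T v : ℕ∞) < m) (hj : j ≤ arity T v)
    (p : List ℕ) (hp : p ∈ attachVerts T v j) : ∀ a ∈ p, (a : ℕ∞) < m := by
  intro a ha
  rcases Finset.mem_insert.1 hp with hp1 | him
  · subst hp1
    rcases List.mem_append.1 ha with hav | haj
    · exact T.arity_bound v hv a hav
    · have haj' : a = j := by simpa using haj
      subst haj'
      calc (a : ℕ∞) ≤ (arity T v : ℕ∞) := by exact_mod_cast hj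
        _ < m := hm
  · obtain ⟨q₀, hq₀, rfl⟩ := Finset.mem_image.1 him
    rcases shift_cases v q₀ with hn | he | ⟨c, r, hcr⟩
    · rw [shiftAt_of_not_prefix j hn] at ha
      exact T.arity_bound _ hq₀ a ha
    · subst he
      rw [shiftAt_self] at ha
      exact T.arity_bound _ hv a ha
    · subst hcr
      rw [shiftAt_append_cons] at ha
      split_ifs at ha with hjc
      · rcases List.mem_append.1 ha with hav | har
        · exact T.arity_bound _ hq₀ a (List.mem_append.2 (Or.inl hav))
        · rcases List.mem_cons.1 har with rfl | har'
          · have hcmem : v ++ [c] ∈ T.verts :=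
              T.prefix_closed hq₀
                ((List.prefix_append_right_inj v).2
                  (List.cons_prefix_cons.2 ⟨rfl, List.nil_prefix⟩))
            have hlt := (child_mem_iff T v c).1 hcmem
            calc ((c + 1 : ℕ) : ℕ∞) ≤ (arity T v : ℕ∞) := by exact_mod_cast hlt
              _ < m := hm
          · exact T.arity_bound _ hq₀ a (by simp [har'])
      · exact T.arity_bound _ hq₀ a ha

theorem mem_attachable_iff (T : PTree m) (v : List ℕ) :
    v ∈ attachable T ↔ v ∈ T.verts ∧ arity T v ≠ 0 ∧ (arity T v : ℕ∞) < m := by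
  unfold attachable
  rw [Finset.mem_filter]

/-- The vertex set of `attach T v j`, under the side conditions of the
differential. -/
theorem attach_verts (T : PTree m) {v : List ℕ} {j : ℕ}
    (hv : v ∈ attachable T) (hj : j ≤ arity T v) :
    (attach T v j).verts = attachVerts T v j := by
  obtain ⟨hvT, _, hlt⟩ := (mem_attachable_iff T v).1 hv
  unfold attach mk'
  rw [dif_pos]
  constructor
  · exact Finset.mem_insert_of_mem (Finset.mem_image.2 ⟨[], T.root_mem, shiftAt_nil v j⟩)
  refine ⟨?_, ?_, ?_⟩
  · intro p q hp hq
    exact attachVerts_prefix_closed T j hvT hp hq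
  · intro p i hp
    exact attachVerts_sibling_closed T hvT hj p i hp
  · intro p hp
    exact attachVerts_arity_bound T hvT hlt hj p hp

end PfAux
namespace PfAux

open PTree

variable {m : ℕ∞}

theorem attach_arity_shift (T : PTree m) {v : List ℕ} {j : ℕ}
    (hv : v ∈ attachable T) (hj : j ≤ arity T v) {u : List ℕ} (hu : u ∈ T.verts) :
    arity (attach T v j) (shiftAt v j u) = arity T u + (if u = v then 1 else 0) := by
  apply arity_eq_of_forall
  intro i
  rw [attach_verts T hv hj]
  by_cases huv : u = v
  · rw [huv, if_pos rfl, shiftAt_self]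
    constructor
    · intro hmem
      rcases Finset.mem_insert.1 hmem with h1 | him
      · obtain ⟨-, hji⟩ := List.append_inj' h1 rfl
        have hij : i = j := by simpa using hji
        omega
      · obtain ⟨q₀, hq₀, hsh⟩ := Finset.mem_image.1 him
        rcases shift_cases v q₀ with hn | he | ⟨c, r, hcr⟩
        · rw [shiftAt_of_not_prefix j hn] at hsh
          exact absurd (by rw [hsh]; exact List.prefix_append _ _) hn
        · rw [← he, shiftAt_self] at hsh
          have := congrArg List.length hsh
          simp at this
        · rw [hcr, shiftAt_append_cons] at hsh
          rw [hcr] at hq₀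
          split_ifs at hsh with hjc
          · have h2 := List.append_cancel_left hsh
            have hr : r = [] ∧ c + 1 = i := by
              rw [List.cons.injEq] at h2
              exact ⟨h2.2, h2.1⟩
            have hcm : v ++ [c] ∈ T.verts := by
              rw [← hr.1] at *
              exact hq₀
            have := (child_mem_iff T v c).1 hcm
            omega
          · have h2 := List.append_cancel_left hsh
            have hr : r = [] ∧ c = i := by
              rw [List.cons.injEq] at h2
              exact ⟨h2.2, h2.1⟩
            have hcm : v ++ [c] ∈ T.verts := by
              rw [← hr.1] at *
              exact hq₀
            have := (child_mem_iff T v c).1 hcm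
            omega
    · intro hi
      rcases lt_trichotomy i j with hij | hij | hij
      · exact Finset.mem_insert_of_mem (Finset.mem_image.2
          ⟨v ++ [i], (child_mem_iff T v i).2 (by omega), shiftAt_append_cons_of_lt [] hij⟩)
      · rw [hij]
        exact Finset.mem_insert_self _ _
      · refine Finset.mem_insert_of_mem (Finset.mem_image.2
          ⟨v ++ [i - 1], (child_mem_iff T v (i-1)).2 (by omega), ?_⟩)
        rw [shiftAt_append_cons_of_le [] (by omega)]
        exact app_cons_congr _ _ (by omega)
  · rw [if_neg huv, add_zero]
    constructor
    · intro hmem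
      rcases Finset.mem_insert.1 hmem with h1 | him
      · obtain ⟨hsv, -⟩ := List.append_inj' h1 rfl
        exact absurd (shiftAt_eq_self_iff.1 hsv) huv
      · obtain ⟨q₀, hq₀, hsh⟩ := Finset.mem_image.1 him
        rw [← shiftAt_append_singleton j huv i] at hsh
        have h3 := shiftAt_injective v j hsh
        rw [h3] at hq₀
        exact (child_mem_iff T u i).1 hq₀
    · intro hi
      rw [← shiftAt_append_singleton j huv i]
      exact Finset.mem_insert_of_mem
        (Finset.mem_image.2 ⟨u ++ [i], (child_mem_iff T u i).2 hi, rfl⟩)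

theorem attach_arity_new (T : PTree m) {v : List ℕ} {j : ℕ}
    (hv : v ∈ attachable T) (hj : j ≤ arity T v) :
    arity (attach T v j) (v ++ [j]) = 0 := by
  apply arity_eq_of_forall
  intro i
  rw [attach_verts T hv hj]
  constructor
  · intro hmem
    exfalso
    rcases Finset.mem_insert.1 hmem with h1 | him
    · have := congrArg List.length h1
      simp at this
    · obtain ⟨q₀, hq₀, hsh⟩ := Finset.mem_image.1 him
      have hass : v ++ [j] ++ [i] = v ++ j :: [i] := by simp
      rw [hass] at hsh
      rcases shift_cases v q₀ with hn | he | ⟨c, r, hcr⟩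
      · rw [shiftAt_of_not_prefix j hn] at hsh
        exact hn (by rw [hsh]; exact List.prefix_append _ _)
      · rw [← he, shiftAt_self] at hsh
        have := congrArg List.length hsh
        simp at this
      · rw [hcr, shiftAt_append_cons] at hsh
        split_ifs at hsh with hjc
        · have h2 := List.append_cancel_left hsh
          rw [List.cons.injEq] at h2
          omega
        · have h2 := List.append_cancel_left hsh
          rw [List.cons.injEq] at h2
          omega
  · intro hi
    exact absurd hi (by omega)

theorem attachable_attach_unshift {T : PTree m} {v : List ℕ} {j : ℕ}
    (hv : v ∈ attachable T) (hj : j ≤ arity T v) {w : List ℕ}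
    (hw : w ∈ attachable (attach T v j)) :
    unshiftAt v j w ∈ T.verts ∧ shiftAt v j (unshiftAt v j w) = w := by
  obtain ⟨hwv, hwa, hwm⟩ := (mem_attachable_iff _ _).1 hw
  rw [attach_verts T hv hj] at hwv
  rcases Finset.mem_insert.1 hwv with h1 | him
  · exfalso
    rw [h1] at hwa
    exact hwa (attach_arity_new T hv hj)
  · obtain ⟨q₀, hq₀, hsh⟩ := Finset.mem_image.1 him
    rw [← hsh, unshiftAt_shiftAt]
    exact ⟨hq₀, rfl⟩

end PfAux
namespace PfAux

open PTree

variable {m : ℕ∞}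

theorem count_lemma (V : Finset (List ℕ)) (w : List ℕ) (l : ℕ) (y : List ℕ) :
    (((insert (w ++ [l]) (V.image (shiftAt w l))).erase []).filter
        (fun q => q < shiftAt w l y)).card
      = ((V.erase []).filter (fun q => q < y)).card
        + (if w ++ [l] < shiftAt w l y then 1 else 0) := by
  classical
  have hinj := shiftAt_injective w l
  have hne : (w ++ [l] : List ℕ) ≠ [] := by simp
  rw [Finset.erase_insert_of_ne hne]
  have him : (V.erase []).image (shiftAt w l) = (V.image (shiftAt w l)).erase [] := by
    rw [Finset.image_erase hinj, shiftAt_nil]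
  rw [← him, Finset.filter_insert]
  have hfe : (V.erase []).filter (fun a => shiftAt w l a < shiftAt w l y)
      = (V.erase []).filter (fun q => q < y) := by
    apply Finset.filter_congr
    intro x _
    simp [shiftAt_lt_iff]
  split_ifs with hlt
  · rw [Finset.card_insert_of_notMem, Finset.filter_image, hfe,
      Finset.card_image_of_injective _ hinj]
    intro hmem
    obtain ⟨q₀, -, hq₀⟩ := Finset.mem_image.1 (Finset.mem_of_mem_filter _ hmem)
    exact shiftAt_ne_new w l q₀ hq₀
  · rw [Finset.filter_image, hfe, Finset.card_image_of_injective _ hinj, add_zero]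

theorem neg_one_pow_helper {k : Type} [Field k] (a b c d : ℕ) (h : Odd (a + b + (c + d))) :
    ((-1 : k) ^ a * (-1 : k) ^ b) = -((-1 : k) ^ c * (-1 : k) ^ d) := by
  have h1 : ((-1 : k) ^ (a + b)) * ((-1 : k) ^ (c + d)) = -1 := by
    rw [← pow_add]
    exact Odd.neg_one_pow h
  have h2 : ((-1 : k) ^ (c + d)) * ((-1 : k) ^ (c + d)) = 1 := by
    rw [← pow_add]
    exact Even.neg_one_pow ⟨c + d, rfl⟩
  calc ((-1 : k) ^ a * (-1 : k) ^ b) = ((-1 : k) ^ (a + b)) := by rw [pow_add]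
    _ = ((-1 : k) ^ (a + b)) * (((-1 : k) ^ (c + d)) * ((-1 : k) ^ (c + d))) := by
        rw [h2, mul_one]
    _ = (((-1 : k) ^ (a + b)) * ((-1 : k) ^ (c + d))) * ((-1 : k) ^ (c + d)) := by ring
    _ = -((-1 : k) ^ (c + d)) := by rw [h1]; ring
    _ = -((-1 : k) ^ c * (-1 : k) ^ d) := by rw [pow_add]

/-- All membership facts for the swapped pair of attachments. -/
theorem swap_main (T : PTree m) (v w₀ : List ℕ) (j l : ℕ)
    (hv : v ∈ attachable T) (hj : j ≤ arity T v) (hw₀T : w₀ ∈ T.verts)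
    (hw : shiftAt v j w₀ ∈ attachable (attach T v j))
    (hl : l ≤ arity (attach T v j) (shiftAt v j w₀)) :
    w₀ ∈ attachable T
    ∧ (if w₀ = v ∧ j < l then l - 1 else l) ≤ arity T w₀
    ∧ shiftAt w₀ (if w₀ = v ∧ j < l then l - 1 else l) v
        ∈ attachable (attach T w₀ (if w₀ = v ∧ j < l then l - 1 else l))
    ∧ (if w₀ = v ∧ l ≤ j then j + 1 else j)
        ≤ arity (attach T w₀ (if w₀ = v ∧ j < l then l - 1 else l))
            (shiftAt w₀ (if w₀ = v ∧ j < l then l - 1 else l) v) := by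
  obtain ⟨hvT, hva, hvm⟩ := (mem_attachable_iff T v).1 hv
  obtain ⟨hwv, hwa, hwm⟩ := (mem_attachable_iff _ _).1 hw
  have har := attach_arity_shift T hv hj hw₀T
  by_cases hev : w₀ = v
  · subst hev
    rw [shiftAt_self, if_pos rfl] at har
    rw [shiftAt_self] at hl hwm ⊢
    rw [har] at hl hwm
    simp only [eq_self_iff_true, true_and]
    have hL : (if j < l then l - 1 else l) ≤ arity T w₀ := by split_ifs <;> omega
    have hP3 : w₀ ∈ attachable (attach T w₀ (if j < l then l - 1 else l)) := by
      rw [mem_attachable_iff]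
      have hmem : w₀ ∈ (attach T w₀ (if j < l then l - 1 else l)).verts := by
        rw [attach_verts T hv hL]
        exact Finset.mem_insert_of_mem
          (Finset.mem_image.2 ⟨w₀, hvT, shiftAt_self _ _⟩)
      have harr := attach_arity_shift T hv hL hvT (u := w₀)
      rw [shiftAt_self, if_pos rfl] at harr
      refine ⟨hmem, ?_, ?_⟩
      · omega
      · rw [harr]
        exact_mod_cast hwm
    have harr := attach_arity_shift T hv hL hvT (u := w₀)
    rw [shiftAt_self, if_pos rfl] at harr
    refine ⟨hv, hL, hP3, ?_⟩
    rw [harr]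
    split_ifs <;> omega
  · rw [if_neg (fun h => hev h.1), if_neg (fun h => hev h.1)]
    rw [if_neg hev, add_zero] at har
    rw [har] at hl hwa hwm
    have hP1 : w₀ ∈ attachable T := (mem_attachable_iff T w₀).2 ⟨hw₀T, hwa, hwm⟩
    have hP3 : shiftAt w₀ l v ∈ attachable (attach T w₀ l) := by
      rw [mem_attachable_iff]
      have hmem : shiftAt w₀ l v ∈ (attach T w₀ l).verts := by
        rw [attach_verts T hP1 hl]
        exact Finset.mem_insert_of_mem (Finset.mem_image.2 ⟨v, hvT, rfl⟩)
      have harr := attach_arity_shift T hP1 hl hvT (u := v)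
      rw [if_neg (fun h => hev h.symm), add_zero] at harr
      exact ⟨hmem, by rw [harr]; exact hva, by rw [harr]; exact hvm⟩
    have harr := attach_arity_shift T hP1 hl hvT (u := v)
    rw [if_neg (fun h => hev h.symm), add_zero] at harr
    exact ⟨hP1, hl, hP3, by rw [harr]; exact hj⟩

/-- The two orders of attachment produce the same vertex set. -/
theorem swap_verts_eq (T : PTree m) (v w₀ : List ℕ) (j l : ℕ)
    (hv : v ∈ attachable T) (hj : j ≤ arity T v) (hw₀T : w₀ ∈ T.verts)
    (hw : shiftAt v j w₀ ∈ attachable (attach T v j))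
    (hl : l ≤ arity (attach T v j) (shiftAt v j w₀)) :
    attachVerts (attach T v j) (shiftAt v j w₀) l
      = attachVerts (attach T w₀ (if w₀ = v ∧ j < l then l - 1 else l))
          (shiftAt w₀ (if w₀ = v ∧ j < l then l - 1 else l) v)
          (if w₀ = v ∧ l ≤ j then j + 1 else j) := by
  obtain ⟨hP1, hP2, hP3, hP4⟩ := swap_main T v w₀ j l hv hj hw₀T hw hl
  unfold attachVerts
  rw [attach_verts T hv hj, attach_verts T hP1 hP2]
  unfold attachVerts
  rw [Finset.image_insert, Finset.image_insert, Finset.image_image, Finset.image_image]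
  rw [master_tip1 v j w₀ l, master_tip2 v j w₀ l]
  rw [show (shiftAt (shiftAt v j w₀) l ∘ shiftAt v j)
      = (shiftAt (shiftAt w₀ (if w₀ = v ∧ j < l then l - 1 else l) v)
          (if w₀ = v ∧ l ≤ j then j + 1 else j)
          ∘ shiftAt w₀ (if w₀ = v ∧ j < l then l - 1 else l))
    from funext (master_comp v j w₀ l)]
  exact Finset.insert_comm _ _ _

theorem swap_attach_eq (T : PTree m) (v w₀ : List ℕ) (j l : ℕ)
    (hv : v ∈ attachable T) (hj : j ≤ arity T v) (hw₀T : w₀ ∈ T.verts)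
    (hw : shiftAt v j w₀ ∈ attachable (attach T v j))
    (hl : l ≤ arity (attach T v j) (shiftAt v j w₀)) :
    attach (attach T v j) (shiftAt v j w₀) l
      = attach (attach T w₀ (if w₀ = v ∧ j < l then l - 1 else l))
          (shiftAt w₀ (if w₀ = v ∧ j < l then l - 1 else l) v)
          (if w₀ = v ∧ l ≤ j then j + 1 else j) := by
  apply PTree.ext'
  obtain ⟨hP1, hP2, hP3, hP4⟩ := swap_main T v w₀ j l hv hj hw₀T hw hl
  rw [attach_verts _ hw hl, attach_verts _ hP3 hP4]
  exact swap_verts_eq T v w₀ j l hv hj hw₀T hw hl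

end PfAux
namespace PfAux

open PTree

variable {m : ℕ∞}

theorem attachVerts_def (T : PTree m) (v : List ℕ) (j : ℕ) :
    attachVerts T v j = insert (v ++ [j]) (T.verts.image (shiftAt v j)) := rfl

theorem swap_sign (T : PTree m) (v w₀ : List ℕ) (j l : ℕ)
    (hv : v ∈ attachable T) (hj : j ≤ arity T v) (hw₀T : w₀ ∈ T.verts)
    (hw : shiftAt v j w₀ ∈ attachable (attach T v j))
    (hl : l ≤ arity (attach T v j) (shiftAt v j w₀)) :
    Odd ((((attachVerts T v j).erase []).filter (fun q => q < v ++ [j])).card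
      + (((attachVerts (attach T v j) (shiftAt v j w₀) l).erase []).filter
          (fun q => q < shiftAt v j w₀ ++ [l])).card
      + ((((attachVerts T w₀ (if w₀ = v ∧ j < l then l - 1 else l)).erase []).filter
            (fun q => q < w₀ ++ [if w₀ = v ∧ j < l then l - 1 else l])).card
        + (((attachVerts
              (attach T w₀ (if w₀ = v ∧ j < l then l - 1 else l))
              (shiftAt w₀ (if w₀ = v ∧ j < l then l - 1 else l) v)
              (if w₀ = v ∧ l ≤ j then j + 1 else j)).erase []).filter
            (fun q => q < shiftAt w₀ (if w₀ = v ∧ j < l then l - 1 else l) v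
              ++ [if w₀ = v ∧ l ≤ j then j + 1 else j])).card)) := by
  classical
  obtain ⟨hP1, hP2, hP3, hP4⟩ := swap_main T v w₀ j l hv hj hw₀T hw hl
  have hset := swap_verts_eq T v w₀ j l hv hj hw₀T hw hl
  have hunf2 : attachVerts
      (attach T w₀ (if w₀ = v ∧ j < l then l - 1 else l))
      (shiftAt w₀ (if w₀ = v ∧ j < l then l - 1 else l) v)
      (if w₀ = v ∧ l ≤ j then j + 1 else j)
      = insert ((shiftAt w₀ (if w₀ = v ∧ j < l then l - 1 else l) v)
            ++ [if w₀ = v ∧ l ≤ j then j + 1 else j])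
          ((attachVerts T w₀ (if w₀ = v ∧ j < l then l - 1 else l)).image
            (shiftAt (shiftAt w₀ (if w₀ = v ∧ j < l then l - 1 else l) v)
              (if w₀ = v ∧ l ≤ j then j + 1 else j))) := by
    rw [attachVerts_def (attach T w₀ (if w₀ = v ∧ j < l then l - 1 else l)),
      attach_verts T hP1 hP2]
  have hunf1 : attachVerts (attach T v j) (shiftAt v j w₀) l
      = insert (shiftAt v j w₀ ++ [l])
          ((attachVerts T v j).image (shiftAt (shiftAt v j w₀) l)) := by
    rw [attachVerts_def (attach T v j), attach_verts T hv hj]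
  have e2eq : (((attachVerts (attach T v j) (shiftAt v j w₀) l).erase []).filter
      (fun q => q < shiftAt v j w₀ ++ [l])).card
      = (((attachVerts T w₀ (if w₀ = v ∧ j < l then l - 1 else l)).erase []).filter
          (fun q => q < w₀ ++ [if w₀ = v ∧ j < l then l - 1 else l])).card
        + (if (shiftAt w₀ (if w₀ = v ∧ j < l then l - 1 else l) v)
              ++ [if w₀ = v ∧ l ≤ j then j + 1 else j]
            < shiftAt (shiftAt w₀ (if w₀ = v ∧ j < l then l - 1 else l) v)
                (if w₀ = v ∧ l ≤ j then j + 1 else j)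
                (w₀ ++ [if w₀ = v ∧ j < l then l - 1 else l]) then 1 else 0) := by
    rw [hset, hunf2, ← master_tip2 v j w₀ l]
    exact count_lemma _ _ _ _
  have e2'eq : (((attachVerts
        (attach T w₀ (if w₀ = v ∧ j < l then l - 1 else l))
        (shiftAt w₀ (if w₀ = v ∧ j < l then l - 1 else l) v)
        (if w₀ = v ∧ l ≤ j then j + 1 else j)).erase []).filter
      (fun q => q < shiftAt w₀ (if w₀ = v ∧ j < l then l - 1 else l) v
        ++ [if w₀ = v ∧ l ≤ j then j + 1 else j])).card
      = (((attachVerts T v j).erase []).filter (fun q => q < v ++ [j])).card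
        + (if shiftAt v j w₀ ++ [l]
            < shiftAt (shiftAt v j w₀) l (v ++ [j]) then 1 else 0) := by
    rw [← hset, hunf1, ← master_tip1 v j w₀ l]
    exact count_lemma _ _ _ _
  have hind : (if (shiftAt w₀ (if w₀ = v ∧ j < l then l - 1 else l) v)
        ++ [if w₀ = v ∧ l ≤ j then j + 1 else j]
      < shiftAt (shiftAt w₀ (if w₀ = v ∧ j < l then l - 1 else l) v)
          (if w₀ = v ∧ l ≤ j then j + 1 else j)
          (w₀ ++ [if w₀ = v ∧ j < l then l - 1 else l]) then 1 else 0)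
      + (if shiftAt v j w₀ ++ [l]
          < shiftAt (shiftAt v j w₀) l (v ++ [j]) then 1 else 0) = 1 := by
    rw [master_tip1 v j w₀ l, ← master_tip2 v j w₀ l]
    set a := (shiftAt w₀ (if w₀ = v ∧ j < l then l - 1 else l) v)
        ++ [if w₀ = v ∧ l ≤ j then j + 1 else j] with ha
    set b := shiftAt (shiftAt w₀ (if w₀ = v ∧ j < l then l - 1 else l) v)
        (if w₀ = v ∧ l ≤ j then j + 1 else j)
        (w₀ ++ [if w₀ = v ∧ j < l then l - 1 else l]) with hb
    have hne : b ≠ a := shiftAt_ne_new _ _ _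
    rcases lt_trichotomy a b with hlt | heq | hgt
    · rw [if_pos hlt, if_neg (asymm hlt)]
    · exact absurd heq.symm hne
    · rw [if_neg (asymm hgt), if_pos hgt]
  rw [e2eq, e2'eq]
  rw [Nat.odd_iff]
  omega

theorem swap_swap (v w₀ : List ℕ) (j l : ℕ) :
    unshiftAt w₀ (if w₀ = v ∧ j < l then l - 1 else l)
        (shiftAt w₀ (if w₀ = v ∧ j < l then l - 1 else l) v) = v
    ∧ (if v = w₀ ∧ (if w₀ = v ∧ j < l then l - 1 else l)
            < (if w₀ = v ∧ l ≤ j then j + 1 else j)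
        then (if w₀ = v ∧ l ≤ j then j + 1 else j) - 1
        else (if w₀ = v ∧ l ≤ j then j + 1 else j)) = j
    ∧ (if v = w₀ ∧ (if w₀ = v ∧ l ≤ j then j + 1 else j)
            ≤ (if w₀ = v ∧ j < l then l - 1 else l)
        then (if w₀ = v ∧ j < l then l - 1 else l) + 1
        else (if w₀ = v ∧ j < l then l - 1 else l)) = l := by
  refine ⟨unshiftAt_shiftAt _ _ _, ?_, ?_⟩ <;>
  · by_cases hev : w₀ = v
    · subst hev
      simp only [eq_self_iff_true, true_and]
      split_ifs <;> omega
    · have hvw : ¬ (v = w₀) := fun h => hev h.symm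
      simp [hev, hvw]

end PfAux
namespace PfAux

open PTree

variable {k : Type} [Field k] {m : ℕ∞}

theorem pMap_single (U : PTree m) : pMap k m (Finsupp.single U (1 : k)) = pVal k m U := by
  unfold pMap
  rw [Finsupp.lsum_single, LinearMap.toSpanSingleton_apply, one_smul]

theorem hpv (U : PTree m) : pVal k m U
    = ∑ w ∈ attachable U, ∑ l ∈ Finset.range (arity U w + 1),
      ((-1:k) ^ ((((attachVerts U w l).erase []).filter (fun q => q < w ++ [l])).card))
        • Finsupp.single (attach U w l) (1:k) := rfl

theorem pMap_pVal (T : PTree m) : pMap k m (pVal k m T) = 0 := by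
  classical
  rw [hpv T, map_sum]
  simp only [map_sum, map_smul, pMap_single]
  simp only [hpv, Finset.smul_sum, smul_smul]
  rw [Finset.sum_sigma', Finset.sum_sigma', Finset.sum_sigma']
  refine Finset.sum_involution
    (fun x _ => ⟨⟨⟨unshiftAt x.1.1.1 x.1.1.2 x.1.2,
        if unshiftAt x.1.1.1 x.1.1.2 x.1.2 = x.1.1.1 ∧ x.1.1.2 < x.2 then x.2 - 1 else x.2⟩,
        shiftAt (unshiftAt x.1.1.1 x.1.1.2 x.1.2)
          (if unshiftAt x.1.1.1 x.1.1.2 x.1.2 = x.1.1.1 ∧ x.1.1.2 < x.2 then x.2 - 1 else x.2)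
          x.1.1.1⟩,
        if unshiftAt x.1.1.1 x.1.1.2 x.1.2 = x.1.1.1 ∧ x.2 ≤ x.1.1.2 then x.1.1.2 + 1
          else x.1.1.2⟩)
    ?_ ?_ ?_ ?_
  · -- f a + f (g a) = 0
    intro a ha
    obtain ⟨⟨⟨v, j⟩, w⟩, l⟩ := a
    simp only [Finset.mem_sigma] at ha
    obtain ⟨⟨⟨hva, hja⟩, hwa⟩, hla⟩ := ha
    rw [Finset.mem_range] at hja hla
    have hj : j ≤ arity T v := by omega
    obtain ⟨hw₀T, hshw⟩ := attachable_attach_unshift hva hj hwa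
    dsimp only
    generalize hg : unshiftAt v j w = w₀ at hshw hw₀T ⊢
    subst hshw
    have hl : l ≤ arity (attach T v j) (shiftAt v j w₀) := by omega
    rw [← swap_attach_eq T v w₀ j l hva hj hw₀T hwa hl]
    rw [neg_one_pow_helper _ _ _ _ (swap_sign T v w₀ j l hva hj hw₀T hwa hl)]
    rw [← add_smul, neg_add_cancel, zero_smul]
  · -- g a ≠ a
    intro a ha hf h
    obtain ⟨⟨⟨v, j⟩, w⟩, l⟩ := a
    dsimp only at h
    have h1 : unshiftAt v j w = v := congrArg (fun y => y.1.1.1) h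
    have h2 : (if unshiftAt v j w = v ∧ j < l then l - 1 else l) = j :=
      congrArg (fun y => y.1.1.2) h
    have h4 : (if unshiftAt v j w = v ∧ l ≤ j then j + 1 else j) = l :=
      congrArg (fun y => y.2) h
    simp only [h1, eq_self_iff_true, true_and] at h2 h4
    split_ifs at h2 h4 <;> omega
  · -- g a ∈ S
    intro a ha
    obtain ⟨⟨⟨v, j⟩, w⟩, l⟩ := a
    simp only [Finset.mem_sigma] at ha
    obtain ⟨⟨⟨hva, hja⟩, hwa⟩, hla⟩ := ha
    rw [Finset.mem_range] at hja hla
    have hj : j ≤ arity T v := by omega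
    obtain ⟨hw₀T, hshw⟩ := attachable_attach_unshift hva hj hwa
    dsimp only
    simp only [Finset.mem_sigma]
    generalize hg : unshiftAt v j w = w₀ at hshw hw₀T ⊢
    subst hshw
    have hl : l ≤ arity (attach T v j) (shiftAt v j w₀) := by omega
    obtain ⟨hP1, hP2, hP3, hP4⟩ := swap_main T v w₀ j l hva hj hw₀T hwa hl
    exact ⟨⟨⟨hP1, Finset.mem_range.2 (by omega)⟩, hP3⟩, Finset.mem_range.2 (by omega)⟩
  · -- g (g a) = a
    intro a ha
    obtain ⟨⟨⟨v, j⟩, w⟩, l⟩ := a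
    simp only [Finset.mem_sigma] at ha
    obtain ⟨⟨⟨hva, hja⟩, hwa⟩, hla⟩ := ha
    rw [Finset.mem_range] at hja hla
    have hj : j ≤ arity T v := by omega
    obtain ⟨hw₀T, hshw⟩ := attachable_attach_unshift hva hj hwa
    dsimp only
    generalize hg : unshiftAt v j w = w₀ at hshw ⊢
    subst hshw
    obtain ⟨hA, hB, hC⟩ := swap_swap v w₀ j l
    rw [hA, hB, hC]

end PfAux

namespace PfAux

theorem pMap_comp_zero (k : Type) [Field k] (m : ℕ∞) :
    (pMap k m).comp (pMap k m) = 0 := by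
  apply Finsupp.lhom_ext
  intro T b
  rw [LinearMap.comp_apply, LinearMap.zero_apply]
  have hb : Finsupp.single T b = b • Finsupp.single T (1 : k) := by
    rw [Finsupp.smul_single, smul_eq_mul, mul_one]
  rw [hb, map_smul, pMap_single, map_smul, pMap_pVal, smul_zero]

end PfAux

/-- **STATEMENT 14.** The vertex-appending differential on determinanted
planar clear-edged `m`-bonsais squares to zero: `∂^{n+1} ∘ ∂^n = 0` for every
`n ≥ 0`, so `(C^•, ∂)` is a cochain complex. -/
theorem planar_d_squared (k : Type) [Field k] (m : ℕ) (hm : 1 ≤ m) :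
    (pMap k (m : ℕ∞)).comp (pMap k (m : ℕ∞)) = 0 :=
  PfAux.pMap_comp_zero k (m : ℕ∞)
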